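/- Let a be a Hopf monoid in a braided monoidal category C and let θ : a → 𝟙 be a normalized right cointegral. Then π := ρ_a ∘ (id_a ⊗ Θ) ∘ α ∘ (δ ⊗ id_a) : a ⊗ a → a (where Θ := θ ∘ μ ∘ (S ⊗ id_a)) satisfies π ∘ δ = id_a and (id ⊗ π) ∘ α ∘ (δ ⊗ id) = δ ∘ π = (π ⊗ id) ∘ α⁻¹ ∘ (id ⊗ δ); in particular the comonoid (a, δ, ε) is coseparable. -/

import Mathlib

open CategoryTheory MonoidalCategory

universe v u

variable (C : Type u) [Category.{v} C] [MonoidalCategory C] [BraidedCategory C]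

/-- The middle-four interchange morphism, built from associators and the braiding,
used to equip the tensor product of two monoids with a monoid structure
`(μ ⊗ μ) ∘ (id ⊗ β ⊗ id)`. -/
def mid4 {C : Type u} [Category.{v} C] [MonoidalCategory C] [BraidedCategory C]
    (W X Y Z : C) : (W ⊗ X) ⊗ (Y ⊗ Z) ⟶ (W ⊗ Y) ⊗ (X ⊗ Z) :=
  (α_ W X (Y ⊗ Z)).hom ≫ (W ◁ (α_ X Y Z).inv) ≫ (W ◁ ((β_ X Y).hom ▷ Z)) ≫
    (W ◁ (α_ Y X Z).hom) ≫ (α_ W Y (X ⊗ Z)).inv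

/-- A Hopf monoid in a braided monoidal category `C`: an object `a` with a monoid
structure `(mul, one)`, a comonoid structure `(comul, counit)` which is a bimonoid
(`comul` and `counit` are monoid morphisms, where `a ⊗ a` carries the multiplication
`(mul ⊗ mul) ∘ (id ⊗ β ⊗ id)`), together with an antipode. -/
structure HopfMonoidIn where
  a : C
  mul : a ⊗ a ⟶ a
  one : 𝟙_ C ⟶ a
  comul : a ⟶ a ⊗ a
  counit : a ⟶ 𝟙_ C
  antipode : a ⟶ a
  mul_assoc' : (mul ⊗ₘ 𝟙 a) ≫ mul = (α_ a a a).hom ≫ (𝟙 a ⊗ₘ mul) ≫ mul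
  one_mul' : (λ_ a).inv ≫ (one ⊗ₘ 𝟙 a) ≫ mul = 𝟙 a
  mul_one' : (ρ_ a).inv ≫ (𝟙 a ⊗ₘ one) ≫ mul = 𝟙 a
  comul_coassoc' : comul ≫ (comul ⊗ₘ 𝟙 a) ≫ (α_ a a a).hom = comul ≫ (𝟙 a ⊗ₘ comul)
  counit_comul' : comul ≫ (counit ⊗ₘ 𝟙 a) ≫ (λ_ a).hom = 𝟙 a
  comul_counit' : comul ≫ (𝟙 a ⊗ₘ counit) ≫ (ρ_ a).hom = 𝟙 a
  mul_comul' : mul ≫ comul = (comul ⊗ₘ comul) ≫ mid4 a a a a ≫ (mul ⊗ₘ mul)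
  one_comul' : one ≫ comul = (λ_ (𝟙_ C)).inv ≫ (one ⊗ₘ one)
  mul_counit' : mul ≫ counit = (counit ⊗ₘ counit) ≫ (λ_ (𝟙_ C)).hom
  one_counit' : one ≫ counit = 𝟙 (𝟙_ C)
  antipode_left' : comul ≫ (antipode ⊗ₘ 𝟙 a) ≫ mul = counit ≫ one
  antipode_right' : comul ≫ (𝟙 a ⊗ₘ antipode) ≫ mul = counit ≫ one

/-!
Write `π (x ⊗ y) = x₁ θ(S(x₂) y)`. Coassociativity alone makes `π` left colinear, and
`π ∘ δ = id` follows from `S(x₁) x₂ = ε(x)` and `θ(1) = 1`. For right colinearity precompose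
with the fusion map `T (x ⊗ y) = x₁ ⊗ x₂ y`, a split epimorphism with section
`x ⊗ y ↦ x₁ ⊗ S(x₂) y`. Since `π (T (x ⊗ y)) = x θ(y)`, both sides become `x₁ ⊗ x₂ θ(y)`:
the right-hand one by the bimonoid axiom and the cointegral property `θ(y₁) y₂ = θ(y) 1`.
-/

open scoped MonObj ComonObj HopfObj

namespace HopfMonoidIn

variable {C : Type u} [Category.{v} C] [MonoidalCategory C] [BraidedCategory C]

instance (H : HopfMonoidIn C) : HopfObj H.a where
  one := H.one
  mul := H.mul
  one_mul := by simpa [Iso.inv_comp_eq] using H.one_mul'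
  mul_one := by simpa [Iso.inv_comp_eq] using H.mul_one'
  mul_assoc := by simpa using H.mul_assoc'
  counit := H.counit
  comul := H.comul
  counit_comul := by rw [← Iso.comp_hom_eq_id]; simpa using H.counit_comul'
  comul_counit := by rw [← Iso.comp_hom_eq_id]; simpa using H.comul_counit'
  comul_assoc := by simpa using H.comul_coassoc'.symm
  mul_comul := by simpa [mid4, tensorμ] using H.mul_comul'
  one_comul := H.one_comul'
  mul_counit := H.mul_counit'
  one_counit := H.one_counit'
  antipode := H.antipode
  antipode_left := by simpa using H.antipode_left'
  antipode_right := by simpa using H.antipode_right'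

end HopfMonoidIn

section Comonoid

variable {C : Type u} [Category.{v} C] [MonoidalCategory C] {X : C} [ComonObj X]

/-- `x ⊗ y ↦ x₁ ⊗ g (x₂ ⊗ y)`, the cofree left `X`-comodule map extending `g`. -/
def cofreeExt {Y Z : C} (g : X ⊗ Y ⟶ Z) : X ⊗ Y ⟶ X ⊗ Z :=
  Δ ▷ Y ≫ (α_ X X Y).hom ≫ X ◁ g

theorem cofreeExt_comp {Y Z W : C} (g : X ⊗ Y ⟶ Z) (f : Z ⟶ W) :
    cofreeExt (g ≫ f) = cofreeExt g ≫ X ◁ f := by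
  simp [cofreeExt]

theorem cofreeExt_counit (Y : C) : cofreeExt (ε[X] ▷ Y ≫ (λ_ Y).hom) = 𝟙 (X ⊗ Y) := by
  rw [cofreeExt, whiskerLeft_comp, ← associator_naturality_middle_assoc,
    ← comp_whiskerRight_assoc, ComonObj.comul_counit]
  monoidal

theorem cofreeExt_comul {Y Z : C} (g : X ⊗ Y ⟶ Z) :
    cofreeExt g ≫ Δ ▷ Z ≫ (α_ X X Z).hom = Δ ▷ Y ≫ (α_ X X Y).hom ≫ X ◁ cofreeExt g := by
  have h : Δ ▷ Y ≫ (α_ X X Y).hom ≫ X ◁ cofreeExt g =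
      (Δ ≫ X ◁ Δ) ▷ Y ≫ (α_ X (X ⊗ X) Y).hom ≫ X ◁ (α_ X X Y).hom ≫ X ◁ X ◁ g := by
    simp only [cofreeExt, comp_whiskerRight, whiskerLeft_comp, Category.assoc,
      associator_naturality_middle_assoc]
  rw [h, ComonObj.comul_assoc, cofreeExt]
  simp only [comp_whiskerRight, Category.assoc, whisker_exchange_assoc]
  monoidal

theorem cofreeExt_comp_cofreeExt {Y Z W : C} (g : X ⊗ Y ⟶ Z) (h : X ⊗ Z ⟶ W) :
    cofreeExt g ≫ cofreeExt h = cofreeExt (cofreeExt g ≫ h) := by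
  rw [cofreeExt.eq_1 h, reassoc_of% cofreeExt_comul, cofreeExt.eq_1 (_ ≫ h), whiskerLeft_comp]

def comulContract (Θ : X ⊗ X ⟶ 𝟙_ C) : X ⊗ X ⟶ X :=
  Δ ▷ X ≫ (α_ X X X).hom ≫ X ◁ Θ ≫ (ρ_ X).hom

theorem cofreeExt_comp_rightUnitor (Θ : X ⊗ X ⟶ 𝟙_ C) :
    cofreeExt Θ ≫ (ρ_ X).hom = comulContract Θ := by
  simp [cofreeExt, comulContract]

theorem comul_whiskerRight_comulContract (Θ : X ⊗ X ⟶ 𝟙_ C) :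
    Δ ▷ X ≫ (α_ X X X).hom ≫ X ◁ comulContract Θ = comulContract Θ ≫ Δ := by
  rw [← cofreeExt_comp_rightUnitor, whiskerLeft_comp, ← reassoc_of% cofreeExt_comul]
  simp

end Comonoid

def IsRightCointegral {C : Type u} [Category.{v} C] [MonoidalCategory C] {A : C} [MonObj A]
    [ComonObj A] (θ : A ⟶ 𝟙_ C) : Prop :=
  Δ ≫ θ ▷ A ≫ (λ_ A).hom = θ ≫ η

section Bimonoid

variable {C : Type u} [Category.{v} C] [MonoidalCategory C] [BraidedCategory C] (A : C)
  [BimonObj A]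

/-- `x ⊗ y ↦ (x₁ ⊗ y₁) ⊗ x₂ y₂`. -/
def diagCoaction : A ⊗ A ⟶ (A ⊗ A) ⊗ A :=
  (Δ ⊗ₘ Δ) ≫ tensorμ A A A A ≫ (A ⊗ A) ◁ μ

theorem cofreeExt_mul_whiskerLeft_comul :
    cofreeExt μ[A] ≫ A ◁ Δ ≫ (α_ A A A).inv = diagCoaction A ≫ cofreeExt μ ▷ A := by
  have rhs : diagCoaction A ≫ cofreeExt μ ▷ A =
      ((Δ ≫ Δ ▷ A) ⊗ₘ Δ) ≫ tensorμ (A ⊗ A) A A A ≫ ((A ⊗ A) ⊗ A) ◁ μ ≫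
        ((α_ A A A).hom ≫ A ◁ μ) ▷ A := by
    have h := tensorμ_natural_left Δ[A] (𝟙 A) A A
    simp only [tensorHom_id, id_whiskerRight] at h
    rw [diagCoaction, cofreeExt, comp_whiskerRight, Category.assoc, Category.assoc,
      whisker_exchange_assoc, ← reassoc_of% h, tensorHom_comp_whiskerRight_assoc]
  have lhs : cofreeExt μ[A] ≫ A ◁ Δ ≫ (α_ A A A).inv =
      ((Δ ≫ A ◁ Δ) ⊗ₘ Δ) ≫ (α_ A (A ⊗ A) (A ⊗ A)).hom ≫ A ◁ tensorμ A A A A ≫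
        A ◁ (A ⊗ A) ◁ μ ≫ A ◁ μ ▷ A ≫ (α_ A A A).inv := by
    simp only [cofreeExt, Category.assoc]
    rw [← whiskerLeft_comp_assoc A μ, BimonObj.mul_comul, tensorHom_def' μ μ]
    simp only [whiskerLeft_comp, Category.assoc, MonoidalCategory.tensorHom_def]
    monoidal
  rw [lhs, rhs, ComonObj.comul_assoc]
  simp only [tensorμ, MonoidalCategory.tensorHom_def, comp_whiskerRight, whiskerLeft_comp,
    Category.assoc]
  monoidal

variable {A}

theorem IsRightCointegral.diagCoaction_whiskerRight {θ : A ⟶ 𝟙_ C} (hθ : IsRightCointegral θ) :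
    diagCoaction A ≫ (A ◁ θ ≫ (ρ_ A).hom) ▷ A = (A ◁ θ ≫ (ρ_ A).hom) ≫ Δ := by
  unfold IsRightCointegral at hθ
  have hθ' : Δ ≫ θ ▷ A = θ ≫ (λ_ (𝟙_ C)).inv ≫ 𝟙_ C ◁ η := by
    rw [← leftUnitor_inv_naturality, ← reassoc_of% hθ]; simp
  have hθ_natural := tensorμ_natural_right A A θ (𝟙 A)
  have hη_natural := tensorμ_natural_right A A (𝟙 (𝟙_ C)) η[A]
  simp only [tensorHom_id, id_tensorHom, whiskerLeft_id] at hθ_natural hη_natural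
  rw [diagCoaction, Category.assoc, Category.assoc, comp_whiskerRight, whisker_exchange_assoc,
    ← reassoc_of% hθ_natural, tensorHom_comp_whiskerLeft_assoc, hθ',
    ← tensorHom_comp_whiskerLeft_assoc, Category.assoc, ← rightUnitor_naturality,
    whisker_exchange_assoc, ← tensorHom_def_assoc]
  congr 1
  rw [whiskerLeft_comp_assoc, reassoc_of% hη_natural, ← whiskerLeft_comp_assoc _ _ μ,
    MonObj.mul_one]
  simp [tensorμ]
  monoidal

end Bimonoid

section Hopf

variable {C : Type u} [Category.{v} C] [MonoidalCategory C] [BraidedCategory C]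
  {A : C} [HopfObj A]

theorem cofreeExt_mul_antipode_mul : cofreeExt μ[A] ≫ 𝒮 ▷ A ≫ μ = ε ▷ A ≫ (λ_ A).hom := by
  calc cofreeExt μ[A] ≫ 𝒮 ▷ A ≫ μ = (Δ ≫ 𝒮 ▷ A ≫ μ) ▷ A ≫ μ := by
        simp only [cofreeExt, comp_whiskerRight, Category.assoc, MonObj.mul_assoc,
          whisker_exchange_assoc]
        monoidal
    _ = ε ▷ A ≫ (λ_ A).hom := by simp

theorem cofreeExt_antipode_mul_mul : cofreeExt (𝒮[A] ▷ A ≫ μ) ≫ μ = ε ▷ A ≫ (λ_ A).hom := by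
  calc cofreeExt (𝒮[A] ▷ A ≫ μ) ≫ μ = (Δ ≫ A ◁ 𝒮 ≫ μ) ▷ A ≫ μ := by
        simp only [cofreeExt, comp_whiskerRight, whiskerLeft_comp, Category.assoc,
          MonObj.mul_assoc]
        monoidal
    _ = ε ▷ A ≫ (λ_ A).hom := by simp

theorem cofreeExt_antipode_mul_comp_cofreeExt_mul :
    cofreeExt (𝒮[A] ▷ A ≫ μ) ≫ cofreeExt μ = 𝟙 (A ⊗ A) := by
  rw [cofreeExt_comp_cofreeExt, cofreeExt_antipode_mul_mul, cofreeExt_counit]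

instance : IsSplitEpi (cofreeExt μ[A]) :=
  ⟨⟨_, cofreeExt_antipode_mul_comp_cofreeExt_mul⟩⟩

theorem comul_comulContract_antipode_mul {θ : A ⟶ 𝟙_ C} (hθ : η ≫ θ = 𝟙 (𝟙_ C)) :
    Δ ≫ comulContract (𝒮 ▷ A ≫ μ ≫ θ) = 𝟙 A := by
  rw [comulContract, ← ComonObj.comul_assoc_assoc, ← whiskerLeft_comp_assoc,
    HopfObj.antipode_left_assoc, hθ, Category.comp_id, ComonObj.comul_counit_assoc]
  simp

theorem cofreeExt_mul_comulContract_antipode_mul (θ : A ⟶ 𝟙_ C) :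
    cofreeExt μ[A] ≫ comulContract (𝒮 ▷ A ≫ μ ≫ θ) = A ◁ θ ≫ (ρ_ A).hom := by
  rw [← cofreeExt_comp_rightUnitor, reassoc_of% cofreeExt_comp_cofreeExt,
    reassoc_of% cofreeExt_mul_antipode_mul, ← Category.assoc, cofreeExt_comp, cofreeExt_counit,
    Category.id_comp]

theorem comulContract_antipode_mul_comul {θ : A ⟶ 𝟙_ C} (hθ : IsRightCointegral θ) :
    comulContract (𝒮 ▷ A ≫ μ ≫ θ) ≫ Δ =
      A ◁ Δ ≫ (α_ A A A).inv ≫ comulContract (𝒮 ▷ A ≫ μ ≫ θ) ▷ A := by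
  rw [← cancel_epi (cofreeExt μ[A]), reassoc_of% cofreeExt_mul_whiskerLeft_comul,
    ← comp_whiskerRight, cofreeExt_mul_comulContract_antipode_mul,
    reassoc_of% cofreeExt_mul_comulContract_antipode_mul, hθ.diagCoaction_whiskerRight,
    Category.assoc]

end Hopf

/-- For a Hopf monoid `a` in a braided monoidal category and a normalized right
cointegral `θ : a → 𝟙`, the morphism `π := ρ ∘ (id ⊗ Θ) ∘ α ∘ (δ ⊗ id)`
(with `Θ := θ ∘ μ ∘ (S ⊗ id)`) is an `a`-bicomodule retraction of `δ`;
in particular the comonoid `(a, δ, ε)` is coseparable. -/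
theorem hopf_monoid_normalized_cointegral_coseparable (H : HopfMonoidIn C)
    (θ : H.a ⟶ 𝟙_ C)
    (hθ : H.comul ≫ (θ ⊗ₘ 𝟙 H.a) ≫ (λ_ H.a).hom = θ ≫ H.one)
    (hnorm : H.one ≫ θ = 𝟙 (𝟙_ C)) :
    H.comul ≫ ((H.comul ⊗ₘ 𝟙 H.a) ≫ (α_ H.a H.a H.a).hom ≫
        (𝟙 H.a ⊗ₘ ((H.antipode ⊗ₘ 𝟙 H.a) ≫ H.mul ≫ θ)) ≫ (ρ_ H.a).hom) = 𝟙 H.a ∧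
    (H.comul ⊗ₘ 𝟙 H.a) ≫ (α_ H.a H.a H.a).hom ≫
        (𝟙 H.a ⊗ₘ ((H.comul ⊗ₘ 𝟙 H.a) ≫ (α_ H.a H.a H.a).hom ≫
          (𝟙 H.a ⊗ₘ ((H.antipode ⊗ₘ 𝟙 H.a) ≫ H.mul ≫ θ)) ≫ (ρ_ H.a).hom)) =
      ((H.comul ⊗ₘ 𝟙 H.a) ≫ (α_ H.a H.a H.a).hom ≫
        (𝟙 H.a ⊗ₘ ((H.antipode ⊗ₘ 𝟙 H.a) ≫ H.mul ≫ θ)) ≫ (ρ_ H.a).hom) ≫ H.comul ∧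
    ((H.comul ⊗ₘ 𝟙 H.a) ≫ (α_ H.a H.a H.a).hom ≫
        (𝟙 H.a ⊗ₘ ((H.antipode ⊗ₘ 𝟙 H.a) ≫ H.mul ≫ θ)) ≫ (ρ_ H.a).hom) ≫ H.comul =
      (𝟙 H.a ⊗ₘ H.comul) ≫ (α_ H.a H.a H.a).inv ≫
        (((H.comul ⊗ₘ 𝟙 H.a) ≫ (α_ H.a H.a H.a).hom ≫
          (𝟙 H.a ⊗ₘ ((H.antipode ⊗ₘ 𝟙 H.a) ≫ H.mul ≫ θ)) ≫ (ρ_ H.a).hom) ⊗ₘ 𝟙 H.a) ∧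
    (∃ π : H.a ⊗ H.a ⟶ H.a,
      H.comul ≫ π = 𝟙 H.a ∧
      (H.comul ⊗ₘ 𝟙 H.a) ≫ (α_ H.a H.a H.a).hom ≫ (𝟙 H.a ⊗ₘ π) = π ≫ H.comul ∧
      π ≫ H.comul = (𝟙 H.a ⊗ₘ H.comul) ≫ (α_ H.a H.a H.a).inv ≫ (π ⊗ₘ 𝟙 H.a)) := by
  have hcointegral : IsRightCointegral θ := by
    rw [IsRightCointegral, ← tensorHom_id]
    exact hθ
  have hsection := comul_comulContract_antipode_mul (A := H.a) hnorm
  have hleft := comul_whiskerRight_comulContract (𝒮 ▷ H.a ≫ μ ≫ θ)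
  have hright := comulContract_antipode_mul_comul hcointegral
  simp only [tensorHom_id, id_tensorHom]
  exact ⟨hsection, hleft, hright, _, hsection, hleft, hright⟩
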